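/- Let B ∈ ℂ^{n×k} have rank k with unique orthonormal polar factor P_*. For any P ∈ ℂ^{n×k} with orthonormal columns, ‖B − P(Pᴴ B)‖_F ≤ ‖B‖_2 · ‖sin Θ(R(P), R(P_*))‖_F, where ‖B‖_2 is the largest singular value of B. -/

import Mathlib

open scoped ComplexOrder
open Matrix

/-- The tuple `f` rearranged into decreasing order; `sortedDesc f 0` is the largest entry. -/
noncomputable def sortedDesc {m : ℕ} (f : Fin m → ℝ) : Fin m → ℝ :=
  fun i => (f ∘ Tuple.sort f) i.rev

/-- The singular values of a complex matrix, in decreasing order. -/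
noncomputable def sv {n k : ℕ} (B : Matrix (Fin n) (Fin k) ℂ) : Fin k → ℝ :=
  sortedDesc fun i =>
    Real.sqrt ((Matrix.posSemidef_conjTranspose_mul_self B).isHermitian.eigenvalues i)

/-- The trace (nuclear) norm: the sum of the singular values. -/
noncomputable def trNorm {n k : ℕ} (B : Matrix (Fin n) (Fin k) ℂ) : ℝ := ∑ i, sv B i

/-- The Frobenius norm. -/
noncomputable def frobNorm {n k : ℕ} (A : Matrix (Fin n) (Fin k) ℂ) : ℝ :=
  Real.sqrt (∑ i, ∑ j, ‖A i j‖ ^ 2)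

/-- `‖sin Θ(R(X), R(Y))‖_F` where `Θ` is the diagonal matrix of canonical angles
`θ_i = arccos σ_i(Xᴴ Y)` between the column spaces of `X` and `Y`. -/
noncomputable def sinThetaF {n k : ℕ} (X Y : Matrix (Fin n) (Fin k) ℂ) : ℝ :=
  Real.sqrt (∑ i, Real.sin (Real.arccos (sv (Xᴴ * Y) i)) ^ 2)

/-- The smallest singular value. -/
noncomputable def smin {n k : ℕ} (B : Matrix (Fin n) (Fin k) ℂ) : ℝ := ⨅ i, sv B i

/-- The spectral norm (largest singular value). -/
noncomputable def s2norm {n k : ℕ} (B : Matrix (Fin n) (Fin k) ℂ) : ℝ := ⨆ i, sv B i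

/-- The orthonormal polar factor `B (Bᴴ B)^{-1/2}` (for `B` of full column rank). -/
noncomputable def polarFactor {n k : ℕ} (B : Matrix (Fin n) (Fin k) ℂ) :
    Matrix (Fin n) (Fin k) ℂ :=
  B * ((Matrix.posSemidef_conjTranspose_mul_self B).1.eigenvectorUnitary.1 *
      Matrix.diagonal ((↑) ∘ Real.sqrt ∘ (Matrix.posSemidef_conjTranspose_mul_self B).1.eigenvalues) *
      (star (Matrix.posSemidef_conjTranspose_mul_self B).1.eigenvectorUnitary :
        Matrix (Fin k) (Fin k) ℂ) : Matrix (Fin k) (Fin k) ℂ)⁻¹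

/-- Eigenvalues of a Hermitian matrix, in decreasing order. -/
noncomputable def eigsDesc {n : ℕ} {H : Matrix (Fin n) (Fin n) ℂ} (hH : H.IsHermitian) :
    Fin n → ℝ :=
  sortedDesc hH.eigenvalues

/-! Factor `B = P_* S` with `S = (Bᴴ B)^{1/2}`. Then `B - P (Pᴴ B) = (P_* - P C) S` with
`C = Pᴴ P_*`, and right multiplication by `S = U diag(σ_i(B)) Uᴴ` enlarges the Frobenius norm by
at most `‖B‖₂`. Since `(P_* - P C)ᴴ (P_* - P C) = I - Cᴴ C`, all `σ_i(C) ≤ 1` and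
`‖P_* - P C‖_F² = k - Σ σ_i(C)² = Σ sin² θ_i`. -/

section Hermitian

variable {𝕜 : Type*} [RCLike 𝕜] {n : Type*} [Fintype n] [DecidableEq n]

noncomputable def psdSqrt {A : Matrix n n 𝕜} (hA : A.PosSemidef) : Matrix n n 𝕜 :=
  hA.1.eigenvectorUnitary.1 * diagonal ((↑) ∘ Real.sqrt ∘ hA.1.eigenvalues) *
    (star hA.1.eigenvectorUnitary : Matrix n n 𝕜)

theorem psdSqrt_mul_self {A : Matrix n n 𝕜} (hA : A.PosSemidef) :
    psdSqrt hA * psdSqrt hA = A := by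
  conv_rhs => rw [hA.1.spectral_theorem, Unitary.conjStarAlgAut_apply]
  have hU := Unitary.coe_star_mul_self hA.1.eigenvectorUnitary
  simp only [psdSqrt, Matrix.mul_assoc]
  rw [← Matrix.mul_assoc _ (hA.1.eigenvectorUnitary : Matrix n n 𝕜), hU, Matrix.one_mul,
    ← Matrix.mul_assoc (diagonal _), diagonal_mul_diagonal]
  congr 3
  funext i
  simp [← RCLike.ofReal_mul, Real.mul_self_sqrt (hA.eigenvalues_nonneg i)]

theorem isHermitian_psdSqrt {A : Matrix n n 𝕜} (hA : A.PosSemidef) : (psdSqrt hA).IsHermitian := by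
  simp only [IsHermitian, psdSqrt, conjTranspose_mul, diagonal_conjTranspose, star_eq_conjTranspose,
    conjTranspose_conjTranspose, Matrix.mul_assoc]
  congr 3
  funext i
  simp

theorem Matrix.IsHermitian.isUnit_det_of_rank_eq {A : Matrix n n 𝕜} (hA : A.IsHermitian)
    (h : A.rank = Fintype.card n) : IsUnit A.det := by
  have hne : ∀ i, hA.eigenvalues i ≠ 0 := fun i hi =>
    (Fintype.card_subtype_lt (p := fun j => hA.eigenvalues j ≠ 0) (not_not.2 hi)).ne
      (hA.rank_eq_card_non_zero_eigs ▸ h)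
  rw [hA.det_eq_prod_eigenvalues, isUnit_iff_ne_zero, Finset.prod_ne_zero_iff]
  exact fun i _ => RCLike.ofReal_ne_zero.2 (hne i)

theorem Matrix.IsHermitian.eigenvalues_le_one {A : Matrix n n 𝕜} (hA : A.IsHermitian)
    (h : (1 - A).PosSemidef) (i : n) : hA.eigenvalues i ≤ 1 := by
  have hnonneg := h.re_dotProduct_nonneg (hA.eigenvectorBasis i)
  have hunit : RCLike.re (star ⇑(hA.eigenvectorBasis i) ⬝ᵥ ⇑(hA.eigenvectorBasis i)) = 1 := by
    rw [dotProduct_comm, ← EuclideanSpace.inner_eq_star_dotProduct, inner_self_eq_norm_sq_to_K,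
      hA.eigenvectorBasis.orthonormal.1 i]
    simp
  rw [sub_mulVec, one_mulVec, dotProduct_sub, map_sub, hunit, ← hA.eigenvalues_eq] at hnonneg
  linarith

theorem isUnit_det_psdSqrt {A : Matrix n n 𝕜} (hA : A.PosSemidef) (h : A.rank = Fintype.card n) :
    IsUnit (psdSqrt hA).det := by
  have hdet := hA.1.isUnit_det_of_rank_eq h
  rw [← psdSqrt_mul_self hA, det_mul] at hdet
  exact isUnit_of_mul_isUnit_left hdet

end Hermitian

section frobNorm

variable {n k : ℕ}

theorem frobNorm_nonneg (A : Matrix (Fin n) (Fin k) ℂ) : 0 ≤ frobNorm A := Real.sqrt_nonneg _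

theorem frobNorm_sq (A : Matrix (Fin n) (Fin k) ℂ) : frobNorm A ^ 2 = ∑ i, ∑ j, ‖A i j‖ ^ 2 :=
  Real.sq_sqrt (by positivity)

theorem trace_conjTranspose_mul_self_eq_frobNorm_sq (A : Matrix (Fin n) (Fin k) ℂ) :
    trace (Aᴴ * A) = ((frobNorm A ^ 2 : ℝ) : ℂ) := by
  simp only [trace, diag, mul_apply, conjTranspose_apply, frobNorm_sq, RCLike.star_def,
    Complex.conj_mul']
  push_cast
  exact Finset.sum_comm

theorem frobNorm_mul_unitary (A : Matrix (Fin n) (Fin k) ℂ) (U : unitaryGroup (Fin k) ℂ) :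
    frobNorm (A * (U : Matrix (Fin k) (Fin k) ℂ)) = frobNorm A := by
  have h : ((frobNorm (A * (U : Matrix (Fin k) (Fin k) ℂ)) ^ 2 : ℝ) : ℂ) =
      ((frobNorm A ^ 2 : ℝ) : ℂ) := by
    rw [← trace_conjTranspose_mul_self_eq_frobNorm_sq,
      ← trace_conjTranspose_mul_self_eq_frobNorm_sq, trace_mul_comm, conjTranspose_mul,
      Matrix.mul_assoc, ← Matrix.mul_assoc (U : Matrix (Fin k) (Fin k) ℂ), ← star_eq_conjTranspose, ← Unitary.coe_star, Unitary.coe_mul_star_self, Matrix.one_mul,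
      trace_mul_comm]
  exact (sq_eq_sq₀ (frobNorm_nonneg _) (frobNorm_nonneg _)).1 (mod_cast h)

theorem frobNorm_mul_diagonal_le (A : Matrix (Fin n) (Fin k) ℂ) (d : Fin k → ℂ) {c : ℝ}
    (hc : 0 ≤ c) (hd : ∀ j, ‖d j‖ ≤ c) : frobNorm (A * diagonal d) ≤ c * frobNorm A := by
  refine (sq_le_sq₀ (frobNorm_nonneg _) (mul_nonneg hc (frobNorm_nonneg _))).1 ?_
  rw [mul_pow, frobNorm_sq, frobNorm_sq, Finset.mul_sum]
  refine Finset.sum_le_sum fun i _ => ?_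
  rw [Finset.mul_sum]
  refine Finset.sum_le_sum fun j _ => ?_
  rw [mul_diagonal, norm_mul, mul_pow, mul_comm (c ^ 2)]
  gcongr
  exact hd j

end frobNorm

theorem exists_sortedDesc_eq {m : ℕ} (f : Fin m → ℝ) (j : Fin m) : ∃ i, sortedDesc f i = f j :=
  ⟨((Tuple.sort f)⁻¹ j).rev, by
    simp [sortedDesc, Equiv.Perm.inv_def]⟩

theorem sum_comp_sortedDesc {m : ℕ} (f : Fin m → ℝ) (g : ℝ → ℝ) :
    ∑ i, g (sortedDesc f i) = ∑ i, g (f i) := by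
  simpa [sortedDesc] using Equiv.sum_comp (Fin.revPerm.trans (Tuple.sort f)) (g ∘ f)

section singularValues

variable {n k : ℕ}

theorem sqrt_eigenvalues_le_s2norm (B : Matrix (Fin n) (Fin k) ℂ) (j : Fin k) :
    √((posSemidef_conjTranspose_mul_self B).1.eigenvalues j) ≤ s2norm B := by
  obtain ⟨i, hi⟩ := exists_sortedDesc_eq
    (fun j => √((posSemidef_conjTranspose_mul_self B).1.eigenvalues j)) j
  exact hi ▸ le_ciSup (Set.finite_range (sv B)).bddAbove i

theorem sum_sv_sq (C : Matrix (Fin n) (Fin k) ℂ) : ∑ i, sv C i ^ 2 = frobNorm C ^ 2 := by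
  have hC := posSemidef_conjTranspose_mul_self C
  have htrace := hC.1.trace_eq_sum_eigenvalues
  rw [trace_conjTranspose_mul_self_eq_frobNorm_sq] at htrace
  rw [sv, sum_comp_sortedDesc _ (· ^ 2)]
  simp only [Real.sq_sqrt (hC.eigenvalues_nonneg _)]
  have hre := congrArg Complex.re htrace
  rw [Complex.ofReal_re, Complex.re_sum] at hre
  simpa using hre.symm

theorem sv_le_one {C : Matrix (Fin n) (Fin k) ℂ} (h : (1 - Cᴴ * C).PosSemidef) (i : Fin k) :
    sv C i ≤ 1 := by
  simp only [sv, sortedDesc, Function.comp_apply]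
  exact Real.sqrt_le_one.2 (IsHermitian.eigenvalues_le_one _ h _)

end singularValues

theorem conjTranspose_mul_self_sub_proj {R : Type*} [Ring R] [StarRing R] {m n : Type*}
    [Fintype m] [Fintype n] [DecidableEq n] {P Q : Matrix m n R} (hP : Pᴴ * P = 1)
    (hQ : Qᴴ * Q = 1) :
    (Q - P * (Pᴴ * Q))ᴴ * (Q - P * (Pᴴ * Q)) = 1 - (Pᴴ * Q)ᴴ * (Pᴴ * Q) := by
  have hC : Qᴴ * P = (Pᴴ * Q)ᴴ := by rw [conjTranspose_mul, conjTranspose_conjTranspose]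
  rw [conjTranspose_sub, conjTranspose_mul, Matrix.sub_mul, Matrix.mul_sub, Matrix.mul_sub, hQ,
    ← Matrix.mul_assoc Qᴴ P, hC]
  simp only [Matrix.mul_assoc]
  rw [← Matrix.mul_assoc Pᴴ P, hP, Matrix.one_mul]
  abel

section canonicalAngles

variable {n k : ℕ}

theorem sinThetaF_nonneg (X Y : Matrix (Fin n) (Fin k) ℂ) : 0 ≤ sinThetaF X Y := Real.sqrt_nonneg _

theorem sinThetaF_sq {X Y : Matrix (Fin n) (Fin k) ℂ} (h : ∀ i, sv (Xᴴ * Y) i ≤ 1) :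
    sinThetaF X Y ^ 2 = k - frobNorm (Xᴴ * Y) ^ 2 := by
  have hsin : ∀ i, Real.sin (Real.arccos (sv (Xᴴ * Y) i)) ^ 2 = 1 - sv (Xᴴ * Y) i ^ 2 := by
    intro i
    have h0 : 0 ≤ sv (Xᴴ * Y) i := Real.sqrt_nonneg _
    rw [Real.sin_arccos, Real.sq_sqrt (by nlinarith [h i])]
  rw [sinThetaF, Real.sq_sqrt (by positivity), Finset.sum_congr rfl fun i _ => hsin i,
    Finset.sum_sub_distrib, sum_sv_sq]
  simp

theorem frobNorm_sub_proj_eq_sinThetaF {P Q : Matrix (Fin n) (Fin k) ℂ} (hP : Pᴴ * P = 1)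
    (hQ : Qᴴ * Q = 1) : frobNorm (Q - P * (Pᴴ * Q)) = sinThetaF P Q := by
  have hM := conjTranspose_mul_self_sub_proj hP hQ
  have hle : ∀ i, sv (Pᴴ * Q) i ≤ 1 := sv_le_one (hM ▸ posSemidef_conjTranspose_mul_self _)
  refine (sq_eq_sq₀ (frobNorm_nonneg _) (sinThetaF_nonneg P Q)).1 ?_
  have htrace := trace_conjTranspose_mul_self_eq_frobNorm_sq (Q - P * (Pᴴ * Q))
  rw [hM, trace_sub, trace_one, trace_conjTranspose_mul_self_eq_frobNorm_sq, Fintype.card_fin]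
    at htrace
  rw [sinThetaF_sq hle]
  exact_mod_cast htrace.symm

end canonicalAngles

section polarFactor

variable {n k : ℕ}

theorem s2norm_nonneg (B : Matrix (Fin n) (Fin k) ℂ) : 0 ≤ s2norm B :=
  Real.iSup_nonneg fun _ => Real.sqrt_nonneg _

theorem frobNorm_mul_psdSqrt_le {m : ℕ} (X : Matrix (Fin m) (Fin k) ℂ)
    (B : Matrix (Fin n) (Fin k) ℂ) :
    frobNorm (X * psdSqrt (posSemidef_conjTranspose_mul_self B)) ≤ s2norm B * frobNorm X := by
  rw [psdSqrt, ← Matrix.mul_assoc, ← Matrix.mul_assoc, ← Unitary.coe_star, frobNorm_mul_unitary]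
  refine (frobNorm_mul_diagonal_le _ _ (s2norm_nonneg B) fun j => ?_).trans_eq
    (by rw [frobNorm_mul_unitary])
  rw [Function.comp_apply, Function.comp_apply, RCLike.norm_ofReal,
    abs_of_nonneg (Real.sqrt_nonneg _)]
  exact sqrt_eigenvalues_le_s2norm B j

theorem isUnit_det_psdSqrt_conjTranspose_mul_self {B : Matrix (Fin n) (Fin k) ℂ}
    (h : B.rank = k) : IsUnit (psdSqrt (posSemidef_conjTranspose_mul_self B)).det :=
  isUnit_det_psdSqrt _ (by rw [rank_conjTranspose_mul_self, h, Fintype.card_fin])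

theorem polarFactor_eq (B : Matrix (Fin n) (Fin k) ℂ) :
    polarFactor B = B * (psdSqrt (posSemidef_conjTranspose_mul_self B))⁻¹ := rfl

theorem polarFactor_mul_psdSqrt {B : Matrix (Fin n) (Fin k) ℂ} (h : B.rank = k) :
    polarFactor B * psdSqrt (posSemidef_conjTranspose_mul_self B) = B := by
  rw [polarFactor_eq, Matrix.mul_assoc,
    nonsing_inv_mul _ (isUnit_det_psdSqrt_conjTranspose_mul_self h), Matrix.mul_one]

theorem conjTranspose_polarFactor_mul_self {B : Matrix (Fin n) (Fin k) ℂ} (h : B.rank = k) :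
    (polarFactor B)ᴴ * polarFactor B = 1 := by
  have hS := isUnit_det_psdSqrt_conjTranspose_mul_self h
  have hSS := psdSqrt_mul_self (posSemidef_conjTranspose_mul_self B)
  have hSH := isHermitian_psdSqrt (posSemidef_conjTranspose_mul_self B)
  rw [polarFactor_eq]
  generalize psdSqrt (posSemidef_conjTranspose_mul_self B) = S at hS hSS hSH ⊢
  rw [conjTranspose_mul, conjTranspose_nonsing_inv, hSH.eq, Matrix.mul_assoc,
    ← Matrix.mul_assoc Bᴴ, ← hSS, ← Matrix.mul_assoc, ← Matrix.mul_assoc S⁻¹ S,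
    nonsing_inv_mul _ hS, Matrix.one_mul, mul_nonsing_inv _ hS]

end polarFactor

theorem residual_le_norm2_mul_sinTheta_general {n k : ℕ}
    (B P : Matrix (Fin n) (Fin k) ℂ) (hrank : B.rank = k) (hP : Pᴴ * P = 1) :
    frobNorm (B - P * (Pᴴ * B)) ≤ s2norm B * sinThetaF P (polarFactor B) := by
  set Q := polarFactor B
  have hres : B - P * (Pᴴ * B) =
      (Q - P * (Pᴴ * Q)) * psdSqrt (posSemidef_conjTranspose_mul_self B) := by
    rw [Matrix.sub_mul, Matrix.mul_assoc, Matrix.mul_assoc, polarFactor_mul_psdSqrt hrank]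
  rw [hres, ← frobNorm_sub_proj_eq_sinThetaF hP (conjTranspose_polarFactor_mul_self hrank)]
  exact frobNorm_mul_psdSqrt_le _ B

theorem residual_le_norm2_mul_sinTheta {n k : ℕ} (hkn : k ≤ n)
    (B P : Matrix (Fin n) (Fin k) ℂ) (hrank : B.rank = k) (hP : Pᴴ * P = 1) :
    frobNorm (B - P * (Pᴴ * B)) ≤ s2norm B * sinThetaF P (polarFactor B) :=
  residual_le_norm2_mul_sinTheta_general B P hrank hP
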